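/- For a, b, c ∈ ℂ with c not a nonpositive integer, and for complex x with |x| < 1/2, the Euler transformation holds: ₂F₁(a, b; c; x) = (1−x)^{c−a−b} · ₂F₁(c−a, c−b; c; x). -/

import Mathlib

/-- The Pochhammer symbol `(a)_n = a(a+1)⋯(a+n-1)`. -/
noncomputable def poch (a : ℂ) (n : ℕ) : ℂ := Polynomial.eval a (ascPochhammer ℂ n)

/-- `z` is not a nonpositive integer. -/
def NotNonposInt (z : ℂ) : Prop := ∀ m : ℕ, z ≠ -(m : ℂ)

/-- The Gauss hypergeometric series `₂F₁(a,b;c;x)`. -/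
noncomputable def twoF1 (a b c x : ℂ) : ℂ :=
  ∑' k : ℕ, poch a k * poch b k / (poch c k * (Nat.factorial k)) * x ^ k

/-!
For `‖x‖ < 1` both `₂F₁(c-a, c-b; c; x)` and the binomial series
`(1 - x)^(c-a-b) = ∑ₖ (a+b-c)ₖ xᵏ / k!` converge absolutely, so their product is a Cauchy
product. Comparing coefficients of `xⁿ` with those of `₂F₁(a, b; c; x)` leaves the polynomial identity
`∑_{l+k=n} C(n,l) (c-a)ₗ (c-b)ₗ (a+b-c)ₖ (c+l)ₖ = (a)ₙ (b)ₙ`,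
which follows from three applications of the Chu–Vandermonde identity
`(x+y)ₙ = ∑_{i+j=n} C(n,i) (x)ᵢ (y)ⱼ`.
-/

open Finset
open scoped Nat

theorem sum_antidiagonal_sum_antidiagonal_add_assoc {M : Type*} [AddCommMonoid M] (n : ℕ)
    (f : ℕ → ℕ → ℕ → M) :
    ∑ p ∈ antidiagonal n, ∑ q ∈ antidiagonal p.2, f p.1 q.1 q.2 =
      ∑ p ∈ antidiagonal n, ∑ q ∈ antidiagonal p.1, f q.1 q.2 p.2 := by
  rw [sum_sigma', sum_sigma']
  refine sum_nbij' (fun x => ⟨(x.1.1 + x.2.1, x.2.2), (x.1.1, x.2.1)⟩)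
    (fun y => ⟨(y.2.1, y.2.2 + y.1.2), (y.2.2, y.1.2)⟩) ?_ ?_ ?_ ?_ ?_ <;>
  · rintro ⟨⟨_, _⟩, ⟨_, _⟩⟩ h
    simp only [mem_sigma, HasAntidiagonal.mem_antidiagonal] at h
    obtain ⟨rfl, rfl⟩ := h
    simp [add_assoc]

theorem choose_mul_choose_eq_choose_mul_choose (l j i : ℕ) :
    (l + (j + i)).choose l * (j + i).choose j = (l + j + i).choose (l + j) * (l + j).choose l := by
  rw [Nat.choose_mul (Nat.le_add_right l j), Nat.add_sub_cancel_left, add_assoc,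
    Nat.add_sub_cancel_left]

lemma poch_add (a : ℂ) (m n : ℕ) : poch a (m + n) = poch a m * poch (a + m) n := by
  simp [poch, ← ascPochhammer_mul, Polynomial.eval_comp]

lemma NotNonposInt.poch_ne_zero {c : ℂ} (hc : NotNonposInt c) (n : ℕ) : poch c n ≠ 0 := by
  rw [poch, Ne, ascPochhammer_eval_eq_zero_iff]
  rintro ⟨k, -, hk⟩
  exact hc k (by rw [hk, neg_neg])

lemma poch_eq_neg_one_pow_mul_smeval (x : ℂ) (n : ℕ) :
    poch x n = (-1) ^ n * (descPochhammer ℤ n).smeval (-x) := by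
  rw [poch, ← Polynomial.ascPochhammer_smeval_eq_eval, ← neg_neg x,
    Polynomial.ascPochhammer_smeval_neg_eq_descPochhammer, neg_neg]
  simp [Units.smul_def, Int.coe_negOnePow]

lemma poch_add_eq_sum_antidiagonal (x y : ℂ) (n : ℕ) :
    poch (x + y) n = ∑ p ∈ antidiagonal n, (n.choose p.1 : ℂ) * (poch x p.1 * poch y p.2) := by
  rw [poch_eq_neg_one_pow_mul_smeval, neg_add, Ring.descPochhammer_smeval_add _ (Commute.all _ _),
    mul_sum]
  refine sum_congr rfl fun p hp => ?_
  rw [poch_eq_neg_one_pow_mul_smeval, poch_eq_neg_one_pow_mul_smeval,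
    ← HasAntidiagonal.mem_antidiagonal.mp hp, pow_add]
  ring

lemma sum_antidiagonal_choose_mul_poch_eq_poch_mul_poch (a b c : ℂ) (n : ℕ) :
    ∑ p ∈ antidiagonal n, (n.choose p.1 : ℂ) *
      (poch (c - a) p.1 * poch (c - b) p.1 * poch (a + b - c) p.2 * poch (c + p.1) p.2) =
    poch a n * poch b n := by
  set d := a + b - c
  -- `j + i` splits the factor `(c + l)_{j+i}` and `l + j` splits `(c - a)_{l+j}`.
  let T : ℕ → ℕ → ℕ → ℂ := fun l j i => ((l + j + i).choose (l + j) * (l + j).choose l : ℂ) *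
    (poch (c - a) (l + j) * poch (c - b) l * poch d (j + i) * poch a i)
  have expand : ∀ p ∈ antidiagonal n, (n.choose p.1 : ℂ) *
      (poch (c - a) p.1 * poch (c - b) p.1 * poch d p.2 * poch (c + p.1) p.2) =
      ∑ q ∈ antidiagonal p.2, T p.1 q.1 q.2 := by
    rintro ⟨l, k⟩ hlk
    rw [HasAntidiagonal.mem_antidiagonal] at hlk
    subst hlk
    rw [show c + l = (c - a + l) + a by ring, poch_add_eq_sum_antidiagonal, mul_sum, mul_sum]
    refine sum_congr rfl fun ⟨j, i⟩ hji => ?_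
    rw [HasAntidiagonal.mem_antidiagonal] at hji
    subst hji
    have hchoose := congrArg (Nat.cast (R := ℂ)) (choose_mul_choose_eq_choose_mul_choose l j i)
    push_cast at hchoose
    simp only [T, poch_add (c - a) l j, ← hchoose]
    ring
  have collapse : ∀ p ∈ antidiagonal n, ∑ q ∈ antidiagonal p.1, T q.1 q.2 p.2 =
      (n.choose p.1 : ℂ) * (poch (c - a) p.1 * poch d p.2) * poch a n := by
    rintro ⟨m, i⟩ hmi
    rw [HasAntidiagonal.mem_antidiagonal] at hmi
    subst hmi
    rw [show poch a (m + i) = poch a i * poch ((c - b) + (d + i)) m by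
        rw [add_comm m i, poch_add]; congr 2; ring,
      poch_add_eq_sum_antidiagonal, mul_sum, mul_sum]
    refine sum_congr rfl fun ⟨l, j⟩ hlj => ?_
    rw [HasAntidiagonal.mem_antidiagonal] at hlj
    subst hlj
    simp only [T, add_comm j i, poch_add d i j]
    ring
  calc _ = ∑ p ∈ antidiagonal n, ∑ q ∈ antidiagonal p.2, T p.1 q.1 q.2 := sum_congr rfl expand
    _ = ∑ p ∈ antidiagonal n, ∑ q ∈ antidiagonal p.1, T q.1 q.2 p.2 :=
        sum_antidiagonal_sum_antidiagonal_add_assoc n T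
    _ = (∑ p ∈ antidiagonal n, (n.choose p.1 : ℂ) * (poch (c - a) p.1 * poch d p.2)) * poch a n := by
        rw [sum_mul]
        exact sum_congr rfl collapse
    _ = poch a n * poch b n := by
        rw [← poch_add_eq_sum_antidiagonal, mul_comm]
        congr 2
        ring

noncomputable def twoF1Coeff (a b c : ℂ) (k : ℕ) : ℂ := poch a k * poch b k / (poch c k * k !)

lemma sum_antidiagonal_twoF1Coeff_mul_poch_div_factorial {a b c : ℂ} (hc : NotNonposInt c)
    (n : ℕ) :
    ∑ p ∈ antidiagonal n, twoF1Coeff (c - a) (c - b) c p.1 * (poch (a + b - c) p.2 / p.2 !) =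
      twoF1Coeff a b c n := by
  rw [twoF1Coeff, ← sum_antidiagonal_choose_mul_poch_eq_poch_mul_poch, sum_div]
  refine sum_congr rfl fun ⟨l, k⟩ hlk => ?_
  rw [HasAntidiagonal.mem_antidiagonal] at hlk
  subst hlk
  have hcl := hc.poch_ne_zero l
  have hck : poch (c + l) k ≠ 0 := right_ne_zero_of_mul (poch_add c l k ▸ hc.poch_ne_zero (l + k))
  have hchoose : ((l + k).choose l : ℂ) ≠ 0 := by
    exact_mod_cast (Nat.choose_pos (Nat.le_add_right l k)).ne'
  rw [twoF1Coeff, poch_add c l k, ← Nat.choose_mul_factorial_mul_factorial (Nat.le_add_right l k),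
    Nat.add_sub_cancel_left]
  push_cast
  field_simp

lemma mem_eball_zero_one {E : Type*} [SeminormedAddCommGroup E] {x : E} (hx : ‖x‖ < 1) :
    x ∈ Metric.eball (0 : E) 1 := by
  rwa [Metric.mem_eball, edist_zero_right, enorm_eq_nnnorm, ENNReal.coe_lt_one_iff,
    ← NNReal.coe_lt_one]

lemma summable_norm_ofScalars_mul_pow {f : ℕ → ℂ}
    (hf : 1 ≤ (FormalMultilinearSeries.ofScalars ℂ f).radius) {x : ℂ} (hx : ‖x‖ < 1) :
    Summable fun k => ‖f k * x ^ k‖ := by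
  simpa [FormalMultilinearSeries.ofScalars_apply_eq, mul_comm] using
    (FormalMultilinearSeries.ofScalars ℂ f).summable_norm_apply
      (Metric.eball_subset_eball hf (mem_eball_zero_one hx))

lemma one_le_radius_ordinaryHypergeometricSeries (a b c : ℂ) :
    1 ≤ (ordinaryHypergeometricSeries ℂ a b c).radius := by
  by_cases h : ∀ k : ℕ, (k : ℂ) ≠ -a ∧ (k : ℂ) ≠ -b ∧ (k : ℂ) ≠ -c
  · rw [ordinaryHypergeometricSeries_radius_eq_one ℂ a b c h]
  simp only [not_forall, not_and_or, not_not] at h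
  obtain ⟨k, hk | hk | hk⟩ := h
  · rw [← neg_neg a, ← hk, ordinaryHypergeometric_radius_top_of_neg_nat₁]
    exact le_top
  · rw [← neg_neg b, ← hk, ordinaryHypergeometric_radius_top_of_neg_nat₂]
    exact le_top
  · rw [← neg_neg c, ← hk, ordinaryHypergeometric_radius_top_of_neg_nat₃]
    exact le_top

lemma summable_norm_twoF1Coeff_mul_pow (a b c : ℂ) {x : ℂ} (hx : ‖x‖ < 1) :
    Summable fun k => ‖twoF1Coeff a b c k * x ^ k‖ := by
  have hcoeff : twoF1Coeff a b c = ordinaryHypergeometricCoefficient a b c := by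
    ext k
    simp only [twoF1Coeff, poch, div_eq_mul_inv, mul_inv]
    ring
  rw [hcoeff]
  exact summable_norm_ofScalars_mul_pow (one_le_radius_ordinaryHypergeometricSeries a b c) hx

lemma ringChoose_add_sub_one_eq_poch_div_factorial (s : ℂ) (k : ℕ) :
    Ring.choose (s + k - 1) k = poch s k / k ! := by
  rw [← Ring.multichoose_eq, eq_div_iff (Nat.cast_ne_zero.mpr k.factorial_ne_zero), poch,
    ← Polynomial.ascPochhammer_smeval_eq_eval, ← Ring.factorial_nsmul_multichoose_eq_ascPochhammer,
    nsmul_eq_mul, mul_comm]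

lemma hasFPowerSeriesOnBall_one_sub_cpow_neg (s : ℂ) :
    HasFPowerSeriesOnBall (fun x => (1 - x) ^ (-s))
      (FormalMultilinearSeries.ofScalars ℂ fun k => poch s k / k !) 0 1 := by
  simpa [← ringChoose_add_sub_one_eq_poch_div_factorial, Complex.cpow_neg] using
    Complex.one_div_one_sub_cpow_hasFPowerSeriesOnBall_zero s

lemma hasSum_poch_div_factorial_mul_pow (s : ℂ) {x : ℂ} (hx : ‖x‖ < 1) :
    HasSum (fun k => poch s k / k ! * x ^ k) ((1 - x) ^ (-s)) := by
  simpa [FormalMultilinearSeries.ofScalars_apply_eq, mul_comm] using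
    (hasFPowerSeriesOnBall_one_sub_cpow_neg s).hasSum (mem_eball_zero_one hx)

lemma summable_norm_poch_div_factorial_mul_pow (s : ℂ) {x : ℂ} (hx : ‖x‖ < 1) :
    Summable fun k => ‖poch s k / k ! * x ^ k‖ :=
  summable_norm_ofScalars_mul_pow (hasFPowerSeriesOnBall_one_sub_cpow_neg s).r_le hx

theorem euler_transform (a b c : ℂ) (hc : NotNonposInt c) (x : ℂ) (hx : ‖x‖ < 1 / 2) :
    twoF1 a b c x = (1 - x) ^ (c - a - b) * twoF1 (c - a) (c - b) c x := by
  have hx1 : ‖x‖ < 1 := hx.trans (by norm_num)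
  have hcauchy (n : ℕ) : ∑ p ∈ antidiagonal n, twoF1Coeff (c - a) (c - b) c p.1 * x ^ p.1 *
      (poch (a + b - c) p.2 / p.2 ! * x ^ p.2) = twoF1Coeff a b c n * x ^ n := by
    rw [← sum_antidiagonal_twoF1Coeff_mul_poch_div_factorial hc, sum_mul]
    refine sum_congr rfl fun p hp => ?_
    rw [← HasAntidiagonal.mem_antidiagonal.mp hp, pow_add]
    ring
  calc twoF1 a b c x = ∑' n, twoF1Coeff a b c n * x ^ n := rfl
    _ = twoF1 (c - a) (c - b) c x * (1 - x) ^ (-(a + b - c)) := by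
      rw [← (hasSum_poch_div_factorial_mul_pow _ hx1).tsum_eq, ← tsum_congr hcauchy]
      exact (tsum_mul_tsum_eq_tsum_sum_antidiagonal_of_summable_norm
        (summable_norm_twoF1Coeff_mul_pow _ _ _ hx1)
        (summable_norm_poch_div_factorial_mul_pow _ hx1)).symm
    _ = (1 - x) ^ (c - a - b) * twoF1 (c - a) (c - b) c x := by
      rw [mul_comm, neg_sub, sub_sub]
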